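/- Fix an integer n ≥ 1. For every point (z,w,t) ∈ M_n with t ≠ 0 one has Im(e^w/tⁿ) = 2·Re(1/tⁿ)·Im z. Consequently, the image point (−iz, −i·e^w/(2tⁿ), 1/tⁿ) lies on the quadric {(z',w',t') ∈ ℂ³ : Re w' = Re z' · Re t'}. -/

import Mathlib

/-!
On `M_n` the point `t` lies on the real line through `exp (iθ/n)`, where
`θ = arctan ((Im eʷ - 2 Im z) / Re eʷ)`, so `tⁿ = ρ exp (iθ)` with `ρ` real. Both identities then
reduce to `Im (eʷ · exp (-iθ)) = 2 cos θ · Im z`, which is `tan θ = (Im eʷ - 2 Im z) / Re eʷ`.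
-/

open Complex

noncomputable section

/-- The hypersurface `M_n ⊂ ℂ³`. -/
def Mn (n : ℕ) : Set (ℂ × ℂ × ℂ) :=
  {p | -(Real.pi / 2) < p.2.1.im ∧ p.2.1.im < Real.pi / 2 ∧
    p.2.2.im = p.2.2.re *
      Real.tan ((1 / (n : ℝ)) *
        Real.arctan ((Real.exp p.2.1.re * Real.sin p.2.1.im - 2 * p.1.im) /
          (Real.exp p.2.1.re * Real.cos p.2.1.im)))}

namespace Complex

theorem eq_ofReal_mul_exp_of_im_eq_re_mul_tan {t : ℂ} {φ : ℝ} (hφ : Real.cos φ ≠ 0)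
    (ht : t.im = t.re * Real.tan φ) :
    t = ((t.re / Real.cos φ : ℝ) : ℂ) * exp (φ * I) := by
  apply Complex.ext
  · simp only [re_ofReal_mul, exp_ofReal_mul_I_re]
    field_simp
  · rw [im_ofReal_mul, exp_ofReal_mul_I_im, ht, Real.tan_eq_sin_div_cos]
    ring

theorem ofReal_mul_exp_pow (r φ : ℝ) (n : ℕ) :
    ((r : ℂ) * exp (φ * I)) ^ n = ((r ^ n : ℝ) : ℂ) * exp ((n * φ : ℝ) * I) := by
  rw [mul_pow, ← exp_nat_mul]
  push_cast
  ring_nf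

theorem div_ofReal_mul_exp (v : ℂ) (r θ : ℝ) :
    v / ((r : ℂ) * exp (θ * I)) = ((r⁻¹ : ℝ) : ℂ) * (v * exp ((-θ : ℝ) * I)) := by
  rw [ofReal_neg, neg_mul, exp_neg]
  push_cast
  field_simp

theorem im_div_ofReal_mul_exp (v : ℂ) (r θ : ℝ) :
    (v / ((r : ℂ) * exp (θ * I))).im = r⁻¹ * (v.im * Real.cos θ - v.re * Real.sin θ) := by
  rw [div_ofReal_mul_exp, im_ofReal_mul, mul_im, exp_ofReal_mul_I_re, exp_ofReal_mul_I_im,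
    Real.cos_neg, Real.sin_neg]
  ring

theorem re_one_div_ofReal_mul_exp (r θ : ℝ) :
    (1 / ((r : ℂ) * exp (θ * I))).re = r⁻¹ * Real.cos θ := by
  rw [div_ofReal_mul_exp, re_ofReal_mul, one_mul, exp_ofReal_mul_I_re, Real.cos_neg]

theorem im_div_ofReal_mul_exp_eq {v : ℂ} {c θ : ℝ}
    (h : v.re * Real.sin θ = (v.im - 2 * c) * Real.cos θ) (r : ℝ) :
    (v / (r * exp (θ * I))).im = 2 * (1 / (r * exp (θ * I))).re * c := by
  rw [im_div_ofReal_mul_exp, re_one_div_ofReal_mul_exp]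
  linear_combination (-r⁻¹) * h

theorem re_neg_I_mul_div_two_mul (v u : ℂ) : (-I * v / (2 * u)).re = (v / u).im / 2 := by
  rw [show -I * v / (2 * u) = -I * (v / u) / 2 by ring, div_ofNat_re, neg_mul, neg_re, I_mul_re,
    neg_neg]

end Complex

theorem Real.mul_sin_arctan_div {a : ℝ} (ha : a ≠ 0) (b : ℝ) :
    a * Real.sin (Real.arctan (b / a)) = b * Real.cos (Real.arctan (b / a)) := by
  rw [Real.sin_arctan, Real.cos_arctan]
  field_simp

theorem Real.cos_one_div_mul_arctan_pos (n : ℕ) (x : ℝ) :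
    0 < Real.cos (1 / (n : ℝ) * Real.arctan x) := by
  have harctan : |Real.arctan x| < Real.pi / 2 :=
    abs_lt.mpr ⟨Real.neg_pi_div_two_lt_arctan x, Real.arctan_lt_pi_div_two x⟩
  have hscale : |1 / (n : ℝ)| ≤ 1 := by
    rw [one_div, abs_of_nonneg (by positivity)]
    exact Nat.cast_inv_le_one n
  refine Real.cos_pos_of_mem_Ioo (abs_lt.mp ?_)
  rw [abs_mul]
  exact (mul_le_of_le_one_left (abs_nonneg _) hscale).trans_lt harctan

theorem Mn_spherical_part_general (n : ℕ) (hn : 1 ≤ n) (z w t : ℂ)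
    (hM : (z, w, t) ∈ Mn n) :
    (Complex.exp w / t ^ n).im = 2 * (1 / t ^ n).re * z.im ∧
    (-Complex.I * Complex.exp w / (2 * t ^ n)).re =
      (-Complex.I * z).re * (1 / t ^ n).re := by
  obtain ⟨hw₁, hw₂, ht⟩ := hM
  simp only [← exp_re, ← exp_im] at ht
  have hv : (exp w).re ≠ 0 := by
    rw [exp_re]
    exact (mul_pos (Real.exp_pos _) (Real.cos_pos_of_mem_Ioo ⟨hw₁, hw₂⟩)).ne'
  set θ := Real.arctan (((exp w).im - 2 * z.im) / (exp w).re)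
  have hnθ : (n : ℝ) * (1 / n * θ) = θ := by
    field_simp [show (n : ℝ) ≠ 0 by positivity]
  rw [eq_ofReal_mul_exp_of_im_eq_re_mul_tan (Real.cos_one_div_mul_arctan_pos n _).ne' ht,
    ofReal_mul_exp_pow, hnθ]
  have key := im_div_ofReal_mul_exp_eq (Real.mul_sin_arctan_div hv ((exp w).im - 2 * z.im))
  refine ⟨key _, ?_⟩
  rw [re_neg_I_mul_div_two_mul, key, neg_mul, neg_re, I_mul_re, neg_neg]
  ring

/-- Away from `{t = 0}`, the hypersurface `M_n` satisfies `Im(e^w/tⁿ) = 2 Re(1/tⁿ) Im z`,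
and the map `(z,w,t) ↦ (−iz, −i e^w/(2tⁿ), 1/tⁿ)` sends it into the quadric
`Re w' = Re z' · Re t'`. -/
theorem Mn_spherical_part (n : ℕ) (hn : 1 ≤ n) (z w t : ℂ)
    (hM : (z, w, t) ∈ Mn n) (ht : t ≠ 0) :
    (Complex.exp w / t ^ n).im = 2 * (1 / t ^ n).re * z.im ∧
    (-Complex.I * Complex.exp w / (2 * t ^ n)).re =
      (-Complex.I * z).re * (1 / t ^ n).re :=
  Mn_spherical_part_general n hn z w t hM

end
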